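/- arXiv:1409.0260 — 2 statements merged into one kernel-verified Lean document; each statement's English description precedes it below -/
import Mathlib

section
/- Let |φ⟩ be a unit vector, Π a projection with ‖(Id−Π)|φ⟩‖² ≤ δ, and W = Id + Σ_{ℓ=2}^{4} E_ℓ ⊗ W_ℓ a unitary with ‖W_ℓ‖ ≤ 1 such that Π E_ℓ Π = 0 for ℓ = 2,3,4 (where each E_ℓ acts on a factor disjoint from the W_ℓ factors). If |ψ⟩ = W|φ⟩ satisfies ‖(Id−Π)|ψ⟩‖² ≤ δ, then ‖|ψ⟩ − |φ⟩‖² ≤ 3(δ + 9δ + δ) = 33δ. -/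
open ContinuousLinearMap

/-!
Write `ψ - φ = (ψ - Pψ) + P(ψ - φ) - (φ - Pφ)`. The outer terms have norm at most `√δ`. For the
middle one, `ψ - φ = Σ Eℓ Wℓ φ`, and each `P Eℓ Wℓ φ` only sees the off-code part `φ - Pφ` of `φ`,
because `P Eℓ Wℓ P = P Eℓ P Wℓ = 0`; hence `‖P(ψ - φ)‖ ≤ 3√δ`. Altogether
`‖ψ - φ‖ ≤ 5√δ`, so `‖ψ - φ‖² ≤ 25δ ≤ 33δ`.
-/

section Normed

variable {𝕜 V : Type*} [NontriviallyNormedField 𝕜] [SeminormedAddCommGroup V] [NormedSpace 𝕜 V]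

theorem norm_sub_le_norm_sub_apply_add_norm_apply_sub_add (P : V →L[𝕜] V) (x y : V) :
    ‖y - x‖ ≤ ‖y - P y‖ + ‖P (y - x)‖ + ‖x - P x‖ := by
  calc ‖y - x‖ = ‖(y - P y) + P (y - x) - (x - P x)‖ := by rw [map_sub]; abel_nf
    _ ≤ _ := norm_sub_le_of_le (norm_add_le _ _) le_rfl

theorem norm_apply_comp_comp_le_norm_sub_apply {P E U : V →L[𝕜] V} (hP : ‖P‖ ≤ 1)
    (hE : ‖E‖ ≤ 1) (hU : ‖U‖ ≤ 1) (hdet : P ∘L E ∘L P = 0) (hcomm : U ∘L P = P ∘L U)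
    (x : V) : ‖P (E (U x))‖ ≤ ‖x - P x‖ := by
  have hcode : P (E (U (P x))) = 0 := by
    rw [← comp_apply U P, hcomm]
    simpa using congr($hdet (U x))
  have hoff : P (E (U x)) = (P ∘L E ∘L U) (x - P x) := by simp [hcode]
  have hnorm : ‖P ∘L E ∘L U‖ ≤ 1 :=
    (opNorm_comp_le _ _).trans <| mul_le_one₀ hP (norm_nonneg _) <|
      (opNorm_comp_le _ _).trans <| mul_le_one₀ hE (norm_nonneg _) hU
  rw [hoff]
  exact (le_opNorm _ _).trans <| mul_le_of_le_one_left (norm_nonneg _) hnorm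

end Normed

theorem pauli_error_closeness_general {H : Type*} [NormedAddCommGroup H]
    [InnerProductSpace ℂ H] [FiniteDimensional ℂ H]
    (P W E₂ E₃ E₄ W₂ W₃ W₄ : H →L[ℂ] H)
    (hPproj : P ∘L P = P) (hPsa : ContinuousLinearMap.adjoint P = P)
    (hW : W = 1 + E₂ ∘L W₂ + E₃ ∘L W₃ + E₄ ∘L W₄)
    (hE : ‖E₂‖ ≤ 1 ∧ ‖E₃‖ ≤ 1 ∧ ‖E₄‖ ≤ 1)
    (hWn : ‖W₂‖ ≤ 1 ∧ ‖W₃‖ ≤ 1 ∧ ‖W₄‖ ≤ 1)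
    (hdet : P ∘L E₂ ∘L P = 0 ∧ P ∘L E₃ ∘L P = 0 ∧ P ∘L E₄ ∘L P = 0)
    (hcommP : W₂ ∘L P = P ∘L W₂ ∧ W₃ ∘L P = P ∘L W₃ ∧ W₄ ∘L P = P ∘L W₄)
    (δ : ℝ) (φ ψ : H) (hψ : ψ = W φ)
    (hφP : ‖φ - P φ‖ ^ 2 ≤ δ) (hψP : ‖ψ - P ψ‖ ^ 2 ≤ δ) :
    ‖ψ - φ‖ ^ 2 ≤ 33 * δ := by
  obtain ⟨hE₂, hE₃, hE₄⟩ := hE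
  obtain ⟨hW₂, hW₃, hW₄⟩ := hWn
  obtain ⟨hd₂, hd₃, hd₄⟩ := hdet
  obtain ⟨hc₂, hc₃, hc₄⟩ := hcommP
  have hP : ‖P‖ ≤ 1 := IsStarProjection.norm_le P ⟨hPproj, isSelfAdjoint_iff'.mpr hPsa⟩
  have hdiff : ψ - φ = E₂ (W₂ φ) + E₃ (W₃ φ) + E₄ (W₄ φ) := by
    rw [hψ, hW]
    simp only [add_apply, comp_apply, one_apply_eq_self]
    abel
  have hcode : ‖P (ψ - φ)‖ ≤ 3 * ‖φ - P φ‖ := by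
    rw [hdiff, map_add, map_add]
    refine norm_add₃_le.trans ?_
    linarith [norm_apply_comp_comp_le_norm_sub_apply hP hE₂ hW₂ hd₂ hc₂ φ,
      norm_apply_comp_comp_le_norm_sub_apply hP hE₃ hW₃ hd₃ hc₃ φ,
      norm_apply_comp_comp_le_norm_sub_apply hP hE₄ hW₄ hd₄ hc₄ φ]
  have htri := norm_sub_le_norm_sub_apply_add_norm_apply_sub_add P φ ψ
  nlinarith [norm_nonneg (ψ - φ), norm_nonneg (φ - P φ), norm_nonneg (ψ - P ψ),
    sq_nonneg (‖φ - P φ‖ - ‖ψ - P ψ‖)]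

/-- Key estimate of Claim 1. `P` is the codespace projector (on the code
factor), `W = Id + E₂W₂ + E₃W₃ + E₄W₄` is unitary with `‖Eℓ‖, ‖Wℓ‖ ≤ 1`, the `Eℓ` are
detected errors (`P Eℓ P = 0`), and the `Wℓ` act on a disjoint factor (they commute
with `P` and with the `Eℓ`). If `φ` is a unit vector with `‖(Id−P)φ‖² ≤ δ` and
`ψ = Wφ` satisfies `‖(Id−P)ψ‖² ≤ δ`, then `‖ψ − φ‖² ≤ 33δ`. -/
theorem pauli_error_closeness {H : Type*} [NormedAddCommGroup H]
    [InnerProductSpace ℂ H] [FiniteDimensional ℂ H]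
    (P W E₂ E₃ E₄ W₂ W₃ W₄ : H →L[ℂ] H)
    (hPproj : P ∘L P = P) (hPsa : ContinuousLinearMap.adjoint P = P)
    (hW : W = 1 + E₂ ∘L W₂ + E₃ ∘L W₃ + E₄ ∘L W₄)
    (hWu : ∀ x : H, ‖W x‖ = ‖x‖)
    (hE : ‖E₂‖ ≤ 1 ∧ ‖E₃‖ ≤ 1 ∧ ‖E₄‖ ≤ 1)
    (hWn : ‖W₂‖ ≤ 1 ∧ ‖W₃‖ ≤ 1 ∧ ‖W₄‖ ≤ 1)
    (hdet : P ∘L E₂ ∘L P = 0 ∧ P ∘L E₃ ∘L P = 0 ∧ P ∘L E₄ ∘L P = 0)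
    (hcommP : W₂ ∘L P = P ∘L W₂ ∧ W₃ ∘L P = P ∘L W₃ ∧ W₄ ∘L P = P ∘L W₄)
    (hcommE : W₂ ∘L E₂ = E₂ ∘L W₂ ∧ W₃ ∘L E₃ = E₃ ∘L W₃ ∧ W₄ ∘L E₄ = E₄ ∘L W₄)
    (δ : ℝ) (φ ψ : H) (hφ : ‖φ‖ = 1) (hψ : ψ = W φ)
    (hφP : ‖φ - P φ‖ ^ 2 ≤ δ) (hψP : ‖ψ - P ψ‖ ^ 2 ≤ δ) :
    ‖ψ - φ‖ ^ 2 ≤ 33 * δ :=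
  pauli_error_closeness_general P W E₂ E₃ E₄ W₂ W₃ W₄ hPproj hPsa hW hE hWn hdet hcommP δ φ ψ hψ hφP
    hψP
end

section
/- For the 5-qubit perfect code: the codespace is a 2-dimensional subspace of (C²)^{⊗5} stabilized by the group generated by XZZXI, IXZZX, XIXZZ, ZXIXZ; every nontrivial Pauli operator of weight at most 2 either anticommutes with some stabilizer generator or is detected, and in particular the projector Π onto the codespace satisfies Π E Π = λ_E Π with λ_E = 0 for every weight-1 Pauli error E, so the code detects (indeed corrects) all single-qubit errors. -/
open Matrix

/-- The Pauli X matrix. -/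
noncomputable def pX : Matrix (Fin 2) (Fin 2) ℂ := !![0, 1; 1, 0]
/-- The Pauli Y matrix. -/
noncomputable def pY : Matrix (Fin 2) (Fin 2) ℂ := !![0, -Complex.I; Complex.I, 0]
/-- The Pauli Z matrix. -/
noncomputable def pZ : Matrix (Fin 2) (Fin 2) ℂ := !![1, 0; 0, -1]

/-- Tensor product of five single-qubit operators, as a matrix on `(C²)^{⊗5}`. -/
noncomputable def tp5 (f : Fin 5 → Matrix (Fin 2) (Fin 2) ℂ) :
    Matrix (Fin 5 → Fin 2) (Fin 5 → Fin 2) ℂ :=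
  fun x y => ∏ i, f i (x i) (y i)

/-- The four stabilizer generators XZZXI, IXZZX, XIXZZ, ZXIXZ of the 5-qubit code. -/
noncomputable def stabGen : Fin 4 → Matrix (Fin 5 → Fin 2) (Fin 5 → Fin 2) ℂ :=
  ![tp5 ![pX, pZ, pZ, pX, 1], tp5 ![1, pX, pZ, pZ, pX],
    tp5 ![pX, 1, pX, pZ, pZ], tp5 ![pZ, pX, 1, pX, pZ]]

/-- The element of the stabilizer group indexed by a subset of the generators. -/
noncomputable def stabElem (s : Fin 4 → Bool) : Matrix (Fin 5 → Fin 2) (Fin 5 → Fin 2) ℂ :=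
  (if s 0 then stabGen 0 else 1) * (if s 1 then stabGen 1 else 1) *
    (if s 2 then stabGen 2 else 1) * (if s 3 then stabGen 3 else 1)

/-- The projector `Π = (1/16) Σ_{g ∈ stabilizer group} g` onto the codespace. -/
noncomputable def codeProj : Matrix (Fin 5 → Fin 2) (Fin 5 → Fin 2) ℂ :=
  (1 / 16 : ℂ) • ∑ s : Fin 4 → Bool, stabElem s

/-!
Tensor products of Pauli matrices pairwise commute or anticommute, with the sign read off
qubit by qubit, so all the claims reduce to the parity of finitely many counts. Every
nontrivial element of the stabilizer group anticommutes with some single-qubit Pauli, hence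
is traceless; this separates the sixteen elements from each other and from `-1`, and gives
`trace Π = 2`. Since `Π` absorbs every stabilizer element, an error `E` anticommuting with a
generator `g` satisfies `Π E Π = Π g E Π = -Π E g Π = -Π E Π`, so `Π E Π = 0`; an explicit
syndrome computation shows that every nontrivial Pauli of weight at most two anticommutes
with some generator.
-/

open Finset

instance {m n R : Type*} [AddMonoid R] [IsAddTorsionFree R] : IsAddTorsionFree (Matrix m n R) :=
  inferInstanceAs (IsAddTorsionFree (m → n → R))

lemma twisted_comm_mul {R A : Type*} [CommSemiring R] [Semiring A] [Algebra R A]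
    {M N B : A} {c d : R} (hM : M * B = c • (B * M)) (hN : N * B = d • (B * N)) :
    M * N * B = (c * d) • (B * (M * N)) := by
  rw [mul_assoc, hN, mul_smul_comm, ← mul_assoc, hM, smul_mul_assoc, smul_smul, mul_comm d c,
    mul_assoc]

lemma trace_eq_zero_of_anticommute {n R : Type*} [Fintype n] [DecidableEq n] [CommRing R]
    [IsAddTorsionFree R] {M A : Matrix n n R} (hA : A * A = 1) (h : M * A = -(A * M)) :
    trace M = 0 := by
  refine self_eq_neg.1 ?_
  calc trace M = trace (A * (M * A)) := by rw [trace_mul_comm, mul_assoc, hA, mul_one]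
    _ = -trace (A * A * M) := by rw [h, mul_neg, trace_neg, mul_assoc]
    _ = -trace M := by rw [hA, one_mul]

lemma mul_mul_eq_zero_of_anticommute {A : Type*} [Ring A] [IsAddTorsionFree A] {P g E : A}
    (hPg : P * g = P) (hgP : g * P = P) (h : g * E = -(E * g)) : P * E * P = 0 := by
  refine self_eq_neg.1 ?_
  calc P * E * P = P * (g * E) * P := by rw [← mul_assoc, hPg]
    _ = -(P * E * (g * P)) := by rw [h]; noncomm_ring
    _ = -(P * E * P) := by rw [hgP]

lemma tp5_mul (f g : Fin 5 → Matrix (Fin 2) (Fin 2) ℂ) : tp5 f * tp5 g = tp5 (f * g) := by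
  ext x y
  simp only [tp5, mul_apply, Pi.mul_apply, ← prod_mul_distrib]
  rw [prod_univ_sum]
  rfl

lemma tp5_smul (c : Fin 5 → ℂ) (f : Fin 5 → Matrix (Fin 2) (Fin 2) ℂ) :
    tp5 (fun i => c i • f i) = (∏ i, c i) • tp5 f := by
  ext x y
  simp [tp5, prod_mul_distrib]

lemma tp5_one : tp5 1 = 1 := by
  ext x y
  simp [tp5, one_apply, prod_boole, funext_iff]

lemma tp5_conjTranspose (f : Fin 5 → Matrix (Fin 2) (Fin 2) ℂ) :
    (tp5 f)ᴴ = tp5 (fun i => (f i)ᴴ) := by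
  ext x y
  simp [tp5, conjTranspose_apply]

noncomputable def pauli : Fin 4 → Matrix (Fin 2) (Fin 2) ℂ := ![1, pX, pY, pZ]

lemma range_pauli : Set.range pauli = {1, pX, pY, pZ} := by
  simp only [pauli, range_cons, range_empty, Set.union_empty, Set.singleton_union]

lemma pauli_eq_one_iff (a : Fin 4) : pauli a = 1 ↔ a = 0 := by
  fin_cases a <;> norm_num [pauli, pX, pY, pZ, ← Matrix.ext_iff, Fin.forall_fin_two]

lemma pauli_mul_comm (a b : Fin 4) :
    pauli a * pauli b =
      (if a ≠ 0 ∧ b ≠ 0 ∧ a ≠ b then -1 else 1 : ℂ) • (pauli b * pauli a) := by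
  fin_cases a <;> fin_cases b <;> simp [pauli, pX, pY, pZ]

lemma pauli_mul_self (a : Fin 4) : pauli a * pauli a = 1 := by
  fin_cases a <;> simp [pauli, pX, pY, pZ, one_fin_two]

lemma pauli_conjTranspose (a : Fin 4) : (pauli a)ᴴ = pauli a := by
  fin_cases a <;> simp [pauli, pX, pY, pZ, ← Matrix.ext_iff, Fin.forall_fin_two]

def anticommCount {ι : Type*} [Fintype ι] (e f : ι → Fin 4) : ℕ :=
  #{i | e i ≠ 0 ∧ f i ≠ 0 ∧ e i ≠ f i}

noncomputable def pauliString (e : Fin 5 → Fin 4) :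
    Matrix (Fin 5 → Fin 2) (Fin 5 → Fin 2) ℂ :=
  tp5 fun i => pauli (e i)

lemma pauliString_mul_comm (e f : Fin 5 → Fin 4) :
    pauliString e * pauliString f =
      (-1 : ℂ) ^ anticommCount e f • (pauliString f * pauliString e) := by
  have hsign : ∏ i, (if e i ≠ 0 ∧ f i ≠ 0 ∧ e i ≠ f i then -1 else 1 : ℂ) =
      (-1) ^ anticommCount e f := by
    rw [prod_ite, prod_const, prod_const_one, mul_one, anticommCount]
  rw [pauliString, pauliString, tp5_mul, tp5_mul, ← hsign, ← tp5_smul]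
  exact congrArg tp5 (funext fun i => pauli_mul_comm (e i) (f i))

lemma pauliString_mul_self (e : Fin 5 → Fin 4) : pauliString e * pauliString e = 1 := by
  rw [pauliString, tp5_mul, ← tp5_one]
  exact congrArg tp5 (funext fun i => pauli_mul_self (e i))

lemma isSelfAdjoint_pauliString (e : Fin 5 → Fin 4) : IsSelfAdjoint (pauliString e) := by
  rw [IsSelfAdjoint, star_eq_conjTranspose, pauliString, tp5_conjTranspose]
  simp only [pauli_conjTranspose]

lemma pauliString_anticommute_of_odd {e f : Fin 5 → Fin 4} (h : Odd (anticommCount e f)) :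
    pauliString e * pauliString f = -(pauliString f * pauliString e) := by
  rw [pauliString_mul_comm, h.neg_one_pow, neg_one_smul]

def genString : Fin 4 → Fin 5 → Fin 4 :=
  ![![1, 3, 3, 1, 0], ![0, 1, 3, 3, 1], ![1, 0, 1, 3, 3], ![3, 1, 0, 1, 3]]

lemma stabGen_eq_pauliString (i : Fin 4) : stabGen i = pauliString (genString i) := by
  fin_cases i <;> exact congrArg tp5 (funext fun j => by fin_cases j <;> rfl)

lemma stabGen_commute (i j : Fin 4) : Commute (stabGen i) (stabGen j) := by
  have h : Even (anticommCount (genString i) (genString j)) := by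
    revert i j; decide
  rw [Commute, SemiconjBy, stabGen_eq_pauliString, stabGen_eq_pauliString, pauliString_mul_comm,
    h.neg_one_pow, one_smul]

lemma stabGen_mul_self (i : Fin 4) : stabGen i * stabGen i = 1 := by
  rw [stabGen_eq_pauliString]
  exact pauliString_mul_self _

lemma isSelfAdjoint_stabGen (i : Fin 4) : IsSelfAdjoint (stabGen i) := by
  rw [stabGen_eq_pauliString]
  exact isSelfAdjoint_pauliString _

noncomputable def stabFactor (i : Fin 4) (b : Bool) :
    Matrix (Fin 5 → Fin 2) (Fin 5 → Fin 2) ℂ :=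
  if b then stabGen i else 1

lemma stabElem_eq (s : Fin 4 → Bool) :
    stabElem s =
      stabFactor 0 (s 0) * stabFactor 1 (s 1) * stabFactor 2 (s 2) * stabFactor 3 (s 3) :=
  rfl

lemma commute_stabFactor (i j : Fin 4) (b c : Bool) :
    Commute (stabFactor i b) (stabFactor j c) := by
  cases b <;> cases c <;> simp [stabFactor, stabGen_commute i j]

lemma stabFactor_mul_stabFactor (i : Fin 4) (b c : Bool) :
    stabFactor i b * stabFactor i c = stabFactor i (b ^^ c) := by
  cases b <;> cases c <;> simp [stabFactor, stabGen_mul_self i]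

lemma isSelfAdjoint_stabFactor (i : Fin 4) (b : Bool) : IsSelfAdjoint (stabFactor i b) := by
  cases b
  · exact IsSelfAdjoint.one _
  · exact isSelfAdjoint_stabGen i

lemma stabElem_mul (s t : Fin 4 → Bool) :
    stabElem s * stabElem t = stabElem (fun i => s i ^^ t i) := by
  have comm (i j : Fin 4) := commute_stabFactor i j (s i) (t j)
  simp only [stabElem_eq, ← stabFactor_mul_stabFactor, mul_assoc]
  rw [(comm 3 0).left_comm, (comm 2 0).left_comm, (comm 1 0).left_comm, (comm 3 1).left_comm,
    (comm 2 1).left_comm, (comm 3 2).left_comm]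

lemma stabElem_false : stabElem (fun _ => false) = 1 := by
  simp [stabElem]

lemma stabElem_commute (s t : Fin 4 → Bool) : Commute (stabElem s) (stabElem t) := by
  simp only [Commute, SemiconjBy, stabElem_mul, Bool.xor_comm]

lemma isSelfAdjoint_stabElem (s : Fin 4 → Bool) : IsSelfAdjoint (stabElem s) := by
  have sa (i : Fin 4) := isSelfAdjoint_stabFactor i (s i)
  have comm (i j : Fin 4) := commute_stabFactor i j (s i) (s j)
  have h01 := ((sa 0).commute_iff (sa 1)).1 (comm 0 1)
  have h012 := (h01.commute_iff (sa 2)).1 ((comm 0 2).mul_left (comm 1 2))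
  exact (h012.commute_iff (sa 3)).1 (((comm 0 3).mul_left (comm 1 3)).mul_left (comm 2 3))

lemma stabGen_eq_stabElem (g : Fin 4) : stabGen g = stabElem (fun i => decide (i = g)) := by
  fin_cases g <;> simp [stabElem]

def stabAnticommCount (s : Fin 4 → Bool) (e : Fin 5 → Fin 4) : ℕ :=
  ∑ i, if s i then anticommCount (genString i) e else 0

lemma stabElem_mul_pauliString (s : Fin 4 → Bool) (e : Fin 5 → Fin 4) :
    stabElem s * pauliString e =
      (-1 : ℂ) ^ stabAnticommCount s e • (pauliString e * stabElem s) := by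
  have factor (i : Fin 4) (b : Bool) : stabFactor i b * pauliString e =
      (-1 : ℂ) ^ (if b then anticommCount (genString i) e else 0) •
        (pauliString e * stabFactor i b) := by
    cases b
    · simp [stabFactor]
    · rw [stabFactor, if_pos rfl, if_pos rfl, stabGen_eq_pauliString]
      exact pauliString_mul_comm _ _
  rw [stabElem_eq, twisted_comm_mul (twisted_comm_mul (twisted_comm_mul (factor 0 (s 0))
    (factor 1 (s 1))) (factor 2 (s 2))) (factor 3 (s 3)), stabAnticommCount, Fin.sum_univ_four,
    pow_add, pow_add, pow_add]

lemma exists_odd_stabAnticommCount_single (s : Fin 4 → Bool) (hs : s ≠ fun _ => false) :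
    ∃ j k, Odd (stabAnticommCount s (Pi.single j k)) := by
  revert s; decide

lemma trace_stabElem (s : Fin 4 → Bool) :
    trace (stabElem s) = if s = (fun _ => false) then 32 else 0 := by
  split_ifs with hs
  · simp [hs, stabElem_false, trace_one]
  obtain ⟨j, k, hodd⟩ := exists_odd_stabAnticommCount_single s hs
  refine trace_eq_zero_of_anticommute (pauliString_mul_self (Pi.single j k)) ?_
  rw [stabElem_mul_pauliString, hodd.neg_one_pow, neg_one_smul]

lemma stabElem_ne_neg_one (s : Fin 4 → Bool) : stabElem s ≠ -1 := by
  intro h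
  have := congrArg trace h
  rw [trace_stabElem, trace_neg, trace_one] at this
  split_ifs at this <;> norm_num at this

lemma stabElem_injective : Function.Injective stabElem := by
  intro s t h
  have hxor : stabElem (fun i => s i ^^ t i) = 1 := by
    rw [← stabElem_mul, h, stabElem_mul]
    simpa using stabElem_false
  have htrace := congrArg trace hxor
  rw [trace_stabElem, trace_one] at htrace
  split_ifs at htrace with hst
  · funext i
    simpa using congrFun hst i
  · norm_num at htrace

lemma stabElem_mul_sum (s : Fin 4 → Bool) :
    stabElem s * ∑ t, stabElem t = ∑ t, stabElem t := by
  have hinv : Function.Involutive fun (t : Fin 4 → Bool) i => s i ^^ t i := by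
    intro t
    simp
  rw [mul_sum]
  exact Fintype.sum_bijective _ hinv.bijective _ _ fun t => stabElem_mul s t

lemma stabElem_mul_codeProj (s : Fin 4 → Bool) : stabElem s * codeProj = codeProj := by
  rw [codeProj, mul_smul_comm, stabElem_mul_sum]

lemma commute_codeProj_stabElem (s : Fin 4 → Bool) : Commute codeProj (stabElem s) :=
  ((Commute.sum_left _ _ _ fun t _ => stabElem_commute t s).smul_left _)

lemma codeProj_mul_stabElem (s : Fin 4 → Bool) : codeProj * stabElem s = codeProj := by
  rw [(commute_codeProj_stabElem s).eq, stabElem_mul_codeProj]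

lemma codeProj_mul_self : codeProj * codeProj = codeProj := by
  calc codeProj * codeProj = (1 / 16 : ℂ) • ∑ s : Fin 4 → Bool, stabElem s * codeProj := by
        rw [codeProj, smul_mul_assoc, sum_mul]
    _ = codeProj := by
        simp [stabElem_mul_codeProj, ← Nat.cast_smul_eq_nsmul ℂ, smul_smul]

lemma codeProj_conjTranspose : codeProjᴴ = codeProj := by
  rw [codeProj, conjTranspose_smul, conjTranspose_sum]
  congr 1
  · simp
  · exact sum_congr rfl fun s _ => isSelfAdjoint_stabElem s

lemma trace_codeProj : trace codeProj = 2 := by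
  rw [codeProj, trace_smul, trace_sum]
  simp [trace_stabElem]
  norm_num

lemma codeProj_mul_mul_codeProj_eq_zero {E : Matrix (Fin 5 → Fin 2) (Fin 5 → Fin 2) ℂ}
    {g : Fin 4} (h : stabGen g * E = -(E * stabGen g)) : codeProj * E * codeProj = 0 := by
  rw [stabGen_eq_stabElem] at h
  exact mul_mul_eq_zero_of_anticommute (codeProj_mul_stabElem _) (stabElem_mul_codeProj _) h

set_option maxRecDepth 10000 in
lemma exists_odd_anticommCount_genString {e : Fin 5 → Fin 4} (he : e ≠ 0)
    (hw : #{i | e i ≠ 0} ≤ 2) : ∃ g, Odd (anticommCount (genString g) e) := by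
  revert e; decide

lemma exists_stabGen_anticommute (f : Fin 5 → Matrix (Fin 2) (Fin 2) ℂ)
    (hf : ∀ i, f i ∈ ({1, pX, pY, pZ} : Set (Matrix (Fin 2) (Fin 2) ℂ)))
    (hnz : ∃ i, f i ≠ 1) (hw : {i | f i ≠ 1}.ncard ≤ 2) :
    ∃ g, stabGen g * tp5 f = -(tp5 f * stabGen g) := by
  rw [← range_pauli] at hf
  choose e he using hf
  obtain rfl : (fun i => pauli (e i)) = f := funext he
  simp only [ne_eq, pauli_eq_one_iff] at hnz hw
  rw [Set.ncard_eq_toFinset_card', Set.toFinset_ofPred] at hw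
  obtain ⟨g, hg⟩ := exists_odd_anticommCount_genString (Function.ne_iff.2 hnz) hw
  exact ⟨g, by rw [stabGen_eq_pauliString]; exact pauliString_anticommute_of_odd hg⟩

/-- The 5-qubit perfect code: the stabilizer generators pairwise commute
and generate an abelian group of order 16 not containing `−I`; `Π` is an orthogonal
projection of rank 2 (a 2-dimensional codespace); and every nontrivial Pauli of weight
at most 2 anticommutes with some generator and is detected (`Π E Π = 0`); in
particular all single-qubit Pauli errors are detected. -/
theorem five_qubit_code_detects_single_qubit_errors :
    (∀ i j : Fin 4, stabGen i * stabGen j = stabGen j * stabGen i) ∧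
    (∀ s : Fin 4 → Bool, stabElem s ≠ -1) ∧
    (Function.Injective stabElem) ∧
    (codeProj * codeProj = codeProj ∧ codeProjᴴ = codeProj) ∧
    (Matrix.trace codeProj = 2) ∧
    (∀ f : Fin 5 → Matrix (Fin 2) (Fin 2) ℂ,
      (∀ i, f i ∈ ({1, pX, pY, pZ} : Set (Matrix (Fin 2) (Fin 2) ℂ))) →
      (∃ i, f i ≠ 1) → {i | f i ≠ 1}.ncard ≤ 2 →
      (∃ g : Fin 4, stabGen g * tp5 f = -(tp5 f * stabGen g)) ∧
        codeProj * tp5 f * codeProj = 0) := by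
  refine ⟨fun i j => (stabGen_commute i j).eq, stabElem_ne_neg_one, stabElem_injective,
    ⟨codeProj_mul_self, codeProj_conjTranspose⟩, trace_codeProj, fun f hf hnz hw => ?_⟩
  obtain ⟨g, hg⟩ := exists_stabGen_anticommute f hf hnz hw
  exact ⟨⟨g, hg⟩, codeProj_mul_mul_codeProj_eq_zero hg⟩
end
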